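/- arXiv:1703.00766 — 4 statements merged into one kernel-verified Lean document; each statement's English description precedes it below -/
import Mathlib

section
/- Let R be a commutative Noetherian ring, 𝔞 an ideal of R, and M an R-module. Then M is weakly Laskerian (i.e., every quotient of M has finitely many associated primes) if and only if there exists a finitely generated submodule N of M such that the support of M/N is a finite set. -/
/-!
For `⇐`: given `K`, the image `U` of `N` in `M ⧸ K` is finitely generated, so `Ass U` is finite;
`(M ⧸ K) ⧸ U` is a quotient of `M ⧸ N`, so its associated primes lie in the finite set
`Supp (M ⧸ N)`; and `Ass (M ⧸ K) ⊆ Ass U ∪ Ass ((M ⧸ K) ⧸ U)`.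

For `⇒`: over a Noetherian ring `Supp L = ⋃_{p ∈ Ass L} V(p)`, so finiteness of `Ass (M ⧸ N)` makes
every `Supp (M ⧸ N)` closed, and noetherianity of `Spec R` yields a finitely generated `N₀` with
`Supp (M ⧸ N) = Supp (M ⧸ N₀)` for all finitely generated `N ⊇ N₀`. If this support were infinite,
it would have a minimal point `p` lying below infinitely many primes `q₀, q₁, …`, and `p`, being
minimal in every `Supp (M ⧸ N)`, is associated to every such `M ⧸ N`. This lets one choose
`v₀, v₁, …` with `(N₀ + Rv₀ + ⋯ + Rv_{k-1} : v_k) = p` and `p v_k ⊆ N₀ + ∑_{j<k} q_j v_j` (scale by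
a product of elements of `q_j \ p`); then `K = N₀ + ∑_j q_j v_j` has `(K : v_i) = q_i` for every
`i`, so `M ⧸ K` has infinitely many associated primes.
-/

open CategoryTheory

universe u

variable (R : Type u) [CommRing R]

/-- The `i`-th Ext module `Ext^i_R(N, M)` of `R`-modules. -/
noncomputable def extModule (i : ℕ) (N M : ModuleCat.{u} R) : ModuleCat.{u} R :=
  ((Ext R (ModuleCat.{u} R) i).obj (Opposite.op N)).obj M

/-- A module is weakly Laskerian if every quotient has finitely many associated primes. -/
def IsWeaklyLaskerian (M : Type u) [AddCommGroup M] [Module R M] : Prop :=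
  ∀ N : Submodule R M, (associatedPrimes R (M ⧸ N)).Finite

/-- `M` is `𝔞`-cofinite: `Supp M ⊆ V(𝔞)` and all `Ext^i_R(R/𝔞, M)` are finitely generated. -/
def IsCofinite (𝔞 : Ideal R) (M : ModuleCat.{u} R) : Prop :=
  Module.support R M ⊆ PrimeSpectrum.zeroLocus (𝔞 : Set R) ∧
    ∀ i : ℕ, Module.Finite R (extModule R i (ModuleCat.of R (R ⧸ 𝔞)) M)

/-- `M` is `𝔞`-weakly cofinite: `Supp M ⊆ V(𝔞)` and all `Ext^i_R(R/𝔞, M)` are weakly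
Laskerian. -/
def IsWeaklyCofinite (𝔞 : Ideal R) (M : ModuleCat.{u} R) : Prop :=
  Module.support R M ⊆ PrimeSpectrum.zeroLocus (𝔞 : Set R) ∧
    ∀ i : ℕ, IsWeaklyLaskerian R (extModule R i (ModuleCat.of R (R ⧸ 𝔞)) M)

/-- The Krull dimension of the support of a module. -/
noncomputable def suppDim (M : Type u) [AddCommGroup M] [Module R M] : WithBot ℕ∞ :=
  Order.krullDim (Module.support R M)

/-- The cohomological dimension `cd(𝔞, M) = sup {i | H^i_𝔞(M) ≠ 0}`, as an element of `ℕ∞`. -/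
noncomputable def cohomologicalDim (𝔞 : Ideal R) (M : ModuleCat.{u} R) : ℕ∞ :=
  ⨆ i ∈ {i : ℕ | Nontrivial ((localCohomology 𝔞 i).obj M)}, (i : ℕ∞)

/-- `p` is an attached prime of `M`: `p` is prime and is the annihilator of a quotient
of `M`. -/
def IsAttachedPrime (M : Type u) [AddCommGroup M] [Module R M] (p : Ideal R) : Prop :=
  p.IsPrime ∧ ∃ N : Submodule R M, p = Module.annihilator R (M ⧸ N)

section

open Submodule

variable {R} {M : Type*} [AddCommGroup M] [Module R M]

theorem Submodule.colon_bot_singleton_mk (N : Submodule R M) (x : M) :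
    (⊥ : Submodule R (M ⧸ N)).colon {Submodule.Quotient.mk x} = N.colon {x} := by
  ext r
  rw [mem_colon_singleton, mem_colon_singleton, mem_bot, ← Submodule.Quotient.mk_smul,
    Submodule.Quotient.mk_eq_zero]

theorem mem_associatedPrimes_quotient_iff [IsNoetherianRing R] {N : Submodule R M}
    {I : Ideal R} : I ∈ associatedPrimes R (M ⧸ N) ↔ I.IsPrime ∧ ∃ x : M, I = N.colon {x} := by
  rw [AssociatedPrimes.mem_iff, isAssociatedPrime_iff, (Submodule.Quotient.mk_surjective N).exists]
  simp only [colon_bot_singleton_mk]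

theorem mem_support_of_mem_associatedPrimes {p : Ideal R} (hp : p ∈ associatedPrimes R M) :
    ⟨p, hp.isPrime⟩ ∈ Module.support R M := by
  obtain ⟨-, x, rfl⟩ := hp
  refine Module.mem_support_iff_exists_annihilator.mpr ⟨x, fun r hr => Ideal.le_radical ?_⟩
  rwa [mem_colon_singleton, mem_bot, ← mem_annihilator_span_singleton]

theorem exists_mem_associatedPrimes_le_of_mem_support [IsNoetherianRing R]
    {q : PrimeSpectrum R} (hq : q ∈ Module.support R M) :
    ∃ p ∈ associatedPrimes R M, p ≤ q.asIdeal := by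
  let Rq := Localization.AtPrime q.asIdeal
  have : Nontrivial (LocalizedModule q.asIdeal.primeCompl M) := Module.mem_support_iff.mp hq
  obtain ⟨P, hP⟩ := associatedPrimes.nonempty Rq (LocalizedModule q.asIdeal.primeCompl M)
  refine ⟨P.comap (algebraMap R Rq), ?_, ?_⟩
  · rwa [← Module.associatedPrimes.preimage_comap_associatedPrimes_eq_associatedPrimes_of_isLocalizedModule
      q.asIdeal.primeCompl Rq (LocalizedModule.mkLinearMap q.asIdeal.primeCompl M)] at hP
  · calc P.comap (algebraMap R Rq) ≤ (IsLocalRing.maximalIdeal Rq).comap (algebraMap R Rq) :=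
          Ideal.comap_mono (IsLocalRing.le_maximalIdeal hP.isPrime.ne_top)
      _ = q.asIdeal := Localization.AtPrime.under_maximalIdeal

theorem support_eq_biUnion_associatedPrimes [IsNoetherianRing R] :
    Module.support R M = ⋃ p ∈ associatedPrimes R M, PrimeSpectrum.zeroLocus (p : Set R) := by
  ext q
  simp only [Set.mem_iUnion, exists_prop, PrimeSpectrum.mem_zeroLocus, SetLike.coe_subset_coe]
  refine ⟨exists_mem_associatedPrimes_le_of_mem_support, ?_⟩
  rintro ⟨p, hp, hpq⟩
  exact Module.mem_support_mono (p := ⟨p, hp.isPrime⟩) hpq (mem_support_of_mem_associatedPrimes hp)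

theorem isClosed_support_of_finite_associatedPrimes [IsNoetherianRing R]
    (h : (associatedPrimes R M).Finite) : IsClosed (Module.support R M) := by
  rw [support_eq_biUnion_associatedPrimes]
  exact h.isClosed_biUnion fun p _ => PrimeSpectrum.isClosed_zeroLocus _

theorem finite_associatedPrimes_of_finite_support (h : (Module.support R M).Finite) :
    (associatedPrimes R M).Finite :=
  (h.image PrimeSpectrum.asIdeal).subset fun _ hp =>
    ⟨_, mem_support_of_mem_associatedPrimes hp, rfl⟩

theorem finite_associatedPrimes_of_fg_of_finite_support_quotient [IsNoetherianRing R]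
    {U : Submodule R M} (hU : U.FG) (h : (Module.support R (M ⧸ U)).Finite) :
    (associatedPrimes R M).Finite :=
  have : Module.Finite R U := Module.Finite.iff_fg.mpr hU
  ((associatedPrimes.finite R U).union (finite_associatedPrimes_of_finite_support h)).subset
    (associatedPrimes.subset_union_of_exact U.injective_subtype (LinearMap.exact_subtype_mkQ U))

theorem support_quotient_subset_of_le {N N' : Submodule R M} (h : N ≤ N') :
    Module.support R (M ⧸ N') ⊆ Module.support R (M ⧸ N) :=
  Module.support_subset_of_surjective _ (factor_surjective h)

theorem finite_associatedPrimes_quotient_of_fg_of_finite_support_quotient [IsNoetherianRing R]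
    {N : Submodule R M} (hN : N.FG) (h : (Module.support R (M ⧸ N)).Finite)
    (K : Submodule R M) : (associatedPrimes R (M ⧸ K)).Finite := by
  refine finite_associatedPrimes_of_fg_of_finite_support_quotient (hN.map K.mkQ) (h.subset ?_)
  exact Module.support_subset_of_surjective (N.mapQ _ K.mkQ (le_comap_map _ _))
    (by rw [← LinearMap.range_eq_top, range_mapQ]; simp)

theorem mem_associatedPrimes_of_minimal_mem_support [IsNoetherianRing R] {p : PrimeSpectrum R}
    (hp : Minimal (· ∈ Module.support R M) p) : p.asIdeal ∈ associatedPrimes R M := by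
  obtain ⟨P, hP, hPp⟩ := exists_mem_associatedPrimes_le_of_mem_support hp.prop
  rwa [← congrArg PrimeSpectrum.asIdeal
    (hp.eq_of_le (mem_support_of_mem_associatedPrimes hP) (y := ⟨P, hP.isPrime⟩) hPp)]

theorem minimal_mem_support_of_minimal_mem_associatedPrimes [IsNoetherianRing R] {p : Ideal R}
    (hp : Minimal (· ∈ associatedPrimes R M) p) :
    Minimal (· ∈ Module.support R M) ⟨p, hp.prop.isPrime⟩ := by
  refine ⟨mem_support_of_mem_associatedPrimes hp.prop, fun s hs hsp => ?_⟩
  obtain ⟨P, hP, hPs⟩ := exists_mem_associatedPrimes_le_of_mem_support hs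
  exact (hp.le_of_le hP (hPs.trans hsp)).trans hPs

theorem exists_minimal_mem_support_infinite_Ioi [IsNoetherianRing R]
    (hfin : (associatedPrimes R M).Finite) (hinf : (Module.support R M).Infinite) :
    ∃ p : PrimeSpectrum R, Minimal (· ∈ Module.support R M) p ∧ (Set.Ioi p).Infinite := by
  rw [support_eq_biUnion_associatedPrimes] at hinf
  obtain ⟨P, hP, hPinf⟩ :
      ∃ P ∈ associatedPrimes R M, (PrimeSpectrum.zeroLocus (P : Set R)).Infinite := by
    by_contra! h
    exact hinf (hfin.biUnion h)
  obtain ⟨p, hpP, hp⟩ := hfin.exists_le_minimal hP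
  refine ⟨_, minimal_mem_support_of_minimal_mem_associatedPrimes hp,
    (hPinf.sdiff (Set.finite_singleton ⟨p, hp.prop.isPrime⟩)).mono ?_⟩
  rintro x ⟨hPx, hxp⟩
  exact lt_of_le_of_ne (hpP.trans ((PrimeSpectrum.mem_zeroLocus _ _).mp hPx))
    fun h => hxp (PrimeSpectrum.ext h.symm)

theorem exists_fg_forall_support_quotient_eq [IsNoetherianRing R]
    (h : ∀ N : Submodule R M, (associatedPrimes R (M ⧸ N)).Finite) :
    ∃ N₀ : Submodule R M, N₀.FG ∧ ∀ N : Submodule R M, N.FG → N₀ ≤ N →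
      Module.support R (M ⧸ N) = Module.support R (M ⧸ N₀) := by
  let supp (N : Submodule R M) : TopologicalSpace.Closeds (PrimeSpectrum R) :=
    ⟨Module.support R (M ⧸ N), isClosed_support_of_finite_associatedPrimes (h N)⟩
  obtain ⟨C, hmin⟩ :=
    exists_minimal_of_wellFoundedLT (fun C => ∃ N, N.FG ∧ supp N = C) ⟨_, ⊥, fg_bot, rfl⟩
  obtain ⟨N₀, hN₀, rfl⟩ := hmin.prop
  refine ⟨N₀, hN₀, fun N hN hle => ?_⟩
  exact congrArg SetLike.coe (hmin.eq_of_le ⟨N, hN, rfl⟩ (support_quotient_subset_of_le hle))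

section Construction

variable {p : Ideal R} {q : ℕ → Ideal R} {N₀ : Submodule R M} {v : ℕ → M}

theorem colon_sup_biSup_smul_span_singleton_le (hpq : ∀ j, p ≤ q j)
    (hcolon : ∀ k, (N₀ ⊔ ⨆ j < k, span R {v j}).colon {v k} ≤ p)
    (hsmul : ∀ k, ∀ b ∈ p, b • v k ∈ N₀ ⊔ ⨆ j < k, q j • span R {v j}) (m i : ℕ) :
    (N₀ ⊔ ⨆ j < m, q j • span R {v j}).colon {v i} ≤ q i := by
  have hstage_le {m k : ℕ} (hmk : m ≤ k) :
      N₀ ⊔ ⨆ j < m, q j • span R {v j} ≤ N₀ ⊔ ⨆ j < k, span R {v j} :=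
    sup_le_sup_left (iSup₂_le fun j hj =>
      smul_le_right.trans (le_iSup₂ (f := fun j (_ : j < k) => span R {v j}) j (hj.trans_le hmk))) _
  have hv_mem {j k : ℕ} (hjk : j < k) : v j ∈ N₀ ⊔ ⨆ j < k, span R {v j} :=
    mem_sup_right (le_iSup₂ (f := fun j (_ : j < k) => span R {v j}) j hjk
      (mem_span_singleton_self _))
  induction m generalizing i with
  | zero =>
    exact fun a ha => hpq i <| hcolon i <| mem_colon_singleton.mpr <|
      hstage_le i.zero_le (mem_colon_singleton.mp ha)
  | succ m ih =>
    intro a ha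
    rw [mem_colon_singleton, Nat.iSup_lt_succ, ← sup_assoc, mem_sup] at ha
    obtain ⟨y, hy, z, hz, hyz⟩ := ha
    obtain ⟨c, hc, rfl⟩ := mem_smul_span_singleton.mp hz
    rcases lt_trichotomy i m with him | rfl | hmi
    · have hcp : c ∈ p := hcolon m <| mem_colon_singleton.mpr <| by
        rw [eq_sub_of_add_eq' hyz]
        exact sub_mem (smul_mem _ a (hv_mem him)) (hstage_le le_rfl hy)
      exact ih i (mem_colon_singleton.mpr (hyz ▸ add_mem hy (hsmul m c hcp)))
    · have hacp : a - c ∈ p := hcolon i <| mem_colon_singleton.mpr <| by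
        rw [sub_smul, ← hyz, add_sub_cancel_right]
        exact hstage_le le_rfl hy
      simpa using add_mem (hpq i hacp) hc
    · refine hpq i (hcolon i (mem_colon_singleton.mpr (hstage_le hmi ?_)))
      rw [Nat.iSup_lt_succ, ← sup_assoc]
      exact hyz ▸ add_mem (mem_sup_left hy)
        (mem_sup_right (smul_mem_smul hc (mem_span_singleton_self _)))

theorem colon_sup_iSup_smul_span_singleton (hpq : ∀ j, p ≤ q j)
    (hcolon : ∀ k, (N₀ ⊔ ⨆ j < k, span R {v j}).colon {v k} ≤ p)
    (hsmul : ∀ k, ∀ b ∈ p, b • v k ∈ N₀ ⊔ ⨆ j < k, q j • span R {v j}) (i : ℕ) :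
    (N₀ ⊔ ⨆ j, q j • span R {v j}).colon {v i} = q i := by
  let K (m : ℕ) := N₀ ⊔ ⨆ j < m, q j • span R {v j}
  have hK : Monotone K := fun m k hmk =>
    sup_le_sup_left (biSup_mono fun j (hj : j < m) => hj.trans_le hmk) _
  have hle : N₀ ⊔ ⨆ j, q j • span R {v j} ≤ ⨆ m, K m :=
    sup_le (le_iSup_of_le 0 le_sup_left) <| iSup_le fun j => le_iSup_of_le (j + 1) <|
      le_sup_of_le_right (le_biSup (fun j => q j • span R {v j}) j.lt_succ_self)
  refine le_antisymm (fun a ha => ?_) (fun a ha => ?_)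
  · obtain ⟨m, hm⟩ := (mem_iSup_of_directed K hK.directed_le).mp (hle (mem_colon_singleton.mp ha))
    exact colon_sup_biSup_smul_span_singleton_le hpq hcolon hsmul m i (mem_colon_singleton.mpr hm)
  · exact mem_colon_singleton.mpr <| mem_sup_right <|
      mem_iSup_of_mem i (smul_mem_smul ha (mem_span_singleton_self _))

theorem exists_seq_colon_le_and_smul_mem (hN₀ : N₀.FG) (hp : p.IsPrime) (hpq : ∀ j, p < q j)
    (hpers : ∀ N : Submodule R M, N.FG → N₀ ≤ N → ∃ x : M, N.colon {x} = p) :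
    ∃ v : ℕ → M, (∀ k, (N₀ ⊔ ⨆ j < k, span R {v j}).colon {v k} ≤ p) ∧
      ∀ k, ∀ b ∈ p, b • v k ∈ N₀ ⊔ ⨆ j < k, q j • span R {v j} := by
  choose! next hnext using hpers
  choose g hgq hgp using fun j => SetLike.exists_of_lt (hpq j)
  let u (k : ℕ) : R := ∏ j ∈ Finset.range k, g j
  have hu_notMem (k : ℕ) : u k ∉ p := fun h => by
    obtain ⟨j, -, hj⟩ := hp.prod_mem_iff.mp h
    exact hgp j hj
  have hu_mem {j k : ℕ} (hjk : j < k) : u k ∈ q j :=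
    (q j).mem_of_dvd (Finset.dvd_prod_of_mem g (Finset.mem_range.mpr hjk)) (hgq j)
  let v (k : ℕ) : M :=
    Nat.strongRec (fun k w => u k • next (N₀ ⊔ ⨆ (j) (hj : j < k), span R {w j hj})) k
  let P (k : ℕ) : Submodule R M := N₀ ⊔ ⨆ j < k, span R {v j}
  have hv (k : ℕ) : v k = u k • next (P k) := Nat.strongRec_eq _ _
  have hcolon_next (k : ℕ) : (P k).colon {next (P k)} = p := by
    refine hnext _ (hN₀.sup ?_) le_sup_left
    rw [← span_iUnion₂]
    exact fg_span ((Set.finite_Iio k).biUnion fun j _ => Set.finite_singleton (v j))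
  refine ⟨v, fun k a ha => ?_, fun k b hb => ?_⟩
  · rw [mem_colon_singleton, hv, smul_smul, ← mem_colon_singleton, hcolon_next] at ha
    exact (hp.mem_or_mem ha).resolve_right (hu_notMem k)
  · have hP : P k ≤ (N₀ ⊔ ⨆ j < k, q j • span R {v j}).comap (u k • LinearMap.id) := by
      refine sup_le (fun x hx => mem_sup_left (smul_mem _ _ hx)) (iSup₂_le fun j hj => ?_)
      rw [span_le, Set.singleton_subset_iff]
      exact mem_sup_right (le_iSup₂ (f := fun j (_ : j < k) => q j • span R {v j}) j hj
        (smul_mem_smul (hu_mem hj) (mem_span_singleton_self _)))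
    rw [hv, smul_comm]
    exact hP (mem_colon_singleton.mp ((hcolon_next k).ge hb))

end Construction

theorem exists_infinite_associatedPrimes_quotient [IsNoetherianRing R] {N₀ : Submodule R M}
    (hN₀ : N₀.FG) {p : PrimeSpectrum R} (hinf : (Set.Ioi p).Infinite)
    (hpers : ∀ N : Submodule R M, N.FG → N₀ ≤ N → p.asIdeal ∈ associatedPrimes R (M ⧸ N)) :
    ∃ K : Submodule R M, (associatedPrimes R (M ⧸ K)).Infinite := by
  let q : ℕ ↪ Set.Ioi p := hinf.natEmbedding
  obtain ⟨v, hcolon, hsmul⟩ := exists_seq_colon_le_and_smul_mem (q := fun j => (q j).1.asIdeal)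
    hN₀ p.isPrime (fun j => (q j).2) fun N hN hle => by
      obtain ⟨-, x, hx⟩ := mem_associatedPrimes_quotient_iff.mp (hpers N hN hle)
      exact ⟨x, hx.symm⟩
  refine ⟨_, Set.infinite_of_injective_forall_mem (f := fun j => (q j).1.asIdeal) ?_ fun i =>
    mem_associatedPrimes_quotient_iff.mpr ⟨(q i).1.isPrime, v i,
      (colon_sup_iSup_smul_span_singleton (fun j => (q j).2.le) hcolon hsmul i).symm⟩⟩
  exact fun i j hij => q.injective (Subtype.ext (PrimeSpectrum.ext hij))

theorem exists_fg_finite_support_quotient [IsNoetherianRing R]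
    (h : ∀ N : Submodule R M, (associatedPrimes R (M ⧸ N)).Finite) :
    ∃ N : Submodule R M, N.FG ∧ (Module.support R (M ⧸ N)).Finite := by
  obtain ⟨N₀, hN₀, hstable⟩ := exists_fg_forall_support_quotient_eq h
  refine ⟨N₀, hN₀, not_not.mp fun hinf => ?_⟩
  obtain ⟨p, hmin, hIoi⟩ := exists_minimal_mem_support_infinite_Ioi (h N₀) hinf
  obtain ⟨K, hK⟩ := exists_infinite_associatedPrimes_quotient hN₀ hIoi fun N hN hle =>
    mem_associatedPrimes_of_minimal_mem_support (hstable N hN hle ▸ hmin)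
  exact hK (h K)

end

/-- A module over a Noetherian ring is weakly Laskerian iff it has a finitely generated
submodule with finite support of the quotient. -/
theorem stmt0 [IsNoetherianRing R] (M : Type u) [AddCommGroup M] [Module R M] :
    IsWeaklyLaskerian R M ↔
      ∃ N : Submodule R M, N.FG ∧ (Module.support R (M ⧸ N)).Finite :=
  ⟨exists_fg_finite_support_quotient, fun ⟨_, hN, hfin⟩ =>
    finite_associatedPrimes_quotient_of_fg_of_finite_support_quotient hN hfin⟩
end

section
/- Let (R,𝔪) be a Noetherian local ring, A an Artinian R-module, and 𝔞 an ideal of R. If Hom_R(R/𝔞, A) is a finitely generated R-module, then every attached prime of A containing 𝔞 equals 𝔪, i.e., V(𝔞) ∩ Att_R(A) ⊆ {𝔪}. -/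
/-!
Suppose `p = (N :_R A)` is an attached prime with `𝔞 ⊆ p ≠ 𝔪`, and pick `x ∈ 𝔪 \ p`. Since `A` is
Artinian there is a submodule `S` minimal among those with `x ∉ √(N :_R S)`. Minimality gives
`x • S = S`, and, through the Fitting decomposition of `S` under any `y ∈ 𝔞 ⊆ (N :_R A)`, that `y`
acts nilpotently on `S`; hence `𝔞 ^ c • S = 0` for some `c`. Now `(0 :_A 𝔞)` is an image of
`Hom(R/𝔞, A)`, so it is finitely generated, hence so is `(0 :_A 𝔞 ^ c) ⊇ S`, and Nakayama's lemma
forces `S = 0`, which contradicts `x ∉ √(N :_R S)`.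
-/

open CategoryTheory

universe u

variable (R : Type u) [CommRing R]

open Submodule
open scoped Pointwise

section Torsion

variable {R : Type u} [CommRing R] {A : Type u} [AddCommGroup A] [Module R A]

lemma range_applyₗ_one_eq_torsionBySet (I : Ideal R) :
    LinearMap.range (LinearMap.applyₗ (1 : R ⧸ I) : ((R ⧸ I) →ₗ[R] A) →ₗ[R] A) =
      torsionBySet R A I := by
  ext a
  constructor
  · rintro ⟨f, rfl⟩
    rw [mem_torsionBySet_iff]
    rintro ⟨r, hr⟩
    rw [LinearMap.applyₗ_apply_apply, ← map_smul, Algebra.smul_def, mul_one,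
      Ideal.Quotient.algebraMap_eq, Ideal.Quotient.eq_zero_iff_mem.mpr hr, map_zero]
  · intro ha
    have hker : I ≤ LinearMap.ker (LinearMap.toSpanSingleton R A a) := fun r hr =>
      (mem_torsionBySet_iff _ _).mp ha ⟨r, hr⟩
    refine ⟨I.liftQ _ hker, ?_⟩
    change I.liftQ _ hker (Submodule.Quotient.mk 1) = a
    rw [liftQ_apply, LinearMap.toSpanSingleton_apply, one_smul]

lemma finite_torsionBySet_of_finite_hom (I : Ideal R) [Module.Finite R ((R ⧸ I) →ₗ[R] A)] :
    Module.Finite R (torsionBySet R A I) :=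
  range_applyₗ_one_eq_torsionBySet (A := A) I ▸ inferInstance

lemma smul_mem_torsionBySet_pow {I : Ideal R} {k : ℕ} {r : R} (hr : r ∈ I) {a : A}
    (ha : a ∈ torsionBySet R A ↑(I ^ (k + 1))) : r • a ∈ torsionBySet R A ↑(I ^ k) := by
  rw [mem_torsionBySet_iff] at ha ⊢
  rintro ⟨s, hs⟩
  rw [smul_smul]
  exact ha ⟨s * r, pow_succ I k ▸ Ideal.mul_mem_mul hs hr⟩

lemma isNoetherian_torsionBySet_pow {I : Ideal R} (hI : I.FG)
    [IsNoetherian R (torsionBySet R A I)] (k : ℕ) :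
    IsNoetherian R (torsionBySet R A ↑(I ^ k)) := by
  obtain ⟨F, rfl⟩ := hI
  induction k with
  | zero =>
    rw [pow_zero, Ideal.one_eq_top, Submodule.top_coe, torsionBySet_univ]
    infer_instance
  | succ k ih =>
    let ψ : torsionBySet R A ↑(Ideal.span (F : Set R) ^ (k + 1)) →ₗ[R]
        (F → torsionBySet R A ↑(Ideal.span (F : Set R) ^ k)) :=
      LinearMap.pi fun i => (LinearMap.lsmul R A i).restrict fun _ ha =>
        smul_mem_torsionBySet_pow (subset_span i.2) ha
    have hker : ∀ s ∈ LinearMap.ker ψ, (s : A) ∈ torsionBySet R A ↑(Ideal.span (F : Set R)) := by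
      intro s hs
      rw [← torsionBySet_eq_torsionBySet_span, mem_torsionBySet_iff]
      exact fun i => congrArg Subtype.val (congrFun hs i)
    let ι : LinearMap.ker ψ →ₗ[R] torsionBySet R A ↑(Ideal.span (F : Set R)) :=
      LinearMap.codRestrict _ ((torsionBySet R A _).subtype ∘ₗ (LinearMap.ker ψ).subtype)
        fun s => hker s s.2
    have : IsNoetherian R (LinearMap.ker ψ) :=
      isNoetherian_of_injective ι fun _ _ hst => by
        have h := congrArg Subtype.val hst
        exact Subtype.ext (Subtype.ext h)
    exact isNoetherian_of_range_eq_ker (LinearMap.ker ψ).subtype ψ (range_subtype _)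

lemma fg_of_le_radical_annihilator {I : Ideal R} {S : Submodule R A} (hI : I.FG)
    [IsNoetherian R (torsionBySet R A I)] (hIS : I ≤ S.annihilator.radical) : S.FG := by
  obtain ⟨c, hc⟩ := Ideal.exists_pow_le_of_le_radical_of_fg hIS hI
  have := isNoetherian_torsionBySet_pow (A := A) hI c
  have hle : S ≤ torsionBySet R A ↑(I ^ c) := fun s hs =>
    (mem_torsionBySet_iff _ _).mpr fun r => mem_annihilator.mp (hc r.2) s hs
  have := isNoetherian_of_le hle
  exact Module.Finite.iff_fg.mp inferInstance

end Torsion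

section Minimal

variable {R : Type u} [CommRing R] {A : Type u} [AddCommGroup A] [Module R A]
  {x : R} {N S : Submodule R A}

lemma pointwise_smul_eq_of_minimal_notMem_radical_colon
    (hS : Minimal (fun S : Submodule R A => x ∉ (N.colon S).radical) S) : x • S = S := by
  refine hS.eq_of_le (fun ⟨k, hk⟩ => hS.prop ⟨k + 1, ?_⟩) (smul_le_self_of_tower x S)
  rw [mem_colon_iff_le] at hk ⊢
  rwa [pow_succ, mul_smul]

lemma mem_radical_annihilator_of_minimal_notMem_radical_colon [IsArtinian R A]
    (hS : Minimal (fun S : Submodule R A => x ∉ (N.colon S).radical) S) {y : R}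
    (hy : y ∈ N.colon Set.univ) : y ∈ S.annihilator.radical := by
  let f : Module.End R S := algebraMap R (Module.End R S) y
  obtain ⟨n, hn, hcod⟩ :=
    ((Filter.eventually_ge_atTop 1).and f.eventually_codisjoint_ker_pow_range_pow).exists
  have hfn : ∀ s : S, ((f ^ n) s : A) = y ^ n • (s : A) := fun s => by
    simp [f, ← map_pow]
  have hS₂ : x ∉ (N.colon ((LinearMap.ker (f ^ n)).map S.subtype)).radical := by
    rintro ⟨k, hk⟩
    refine hS.prop ⟨k, mem_colon.mpr fun s hs => ?_⟩
    obtain ⟨u, hu, _, ⟨w, rfl⟩, hsum⟩ :=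
      mem_sup.mp (codisjoint_iff.mp hcod ▸ mem_top : (⟨s, hs⟩ : S) ∈ _)
    obtain ⟨m, rfl⟩ := Nat.exists_eq_add_of_le' hn
    have hs : s = u + y ^ (m + 1) • (w : A) := by
      rw [← hfn]
      exact congrArg Subtype.val hsum.symm
    rw [hs, smul_add, pow_succ', mul_smul, smul_comm (x ^ k) y]
    exact N.add_mem (mem_colon.mp hk _ ⟨u, hu, rfl⟩) (mem_colon.mp hy _ trivial)
  have hS₂S := hS.eq_of_le hS₂ (map_subtype_le _ _)
  refine ⟨n, mem_annihilator.mpr fun s hs => ?_⟩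
  rw [← hS₂S] at hs
  obtain ⟨u, hu, rfl⟩ := hs
  rw [subtype_apply, ← hfn, LinearMap.mem_ker.mp hu, ZeroMemClass.coe_zero]

end Minimal

theorem stmt1 [IsNoetherianRing R] [IsLocalRing R] (A : Type u) [AddCommGroup A] [Module R A]
    [IsArtinian R A] (𝔞 : Ideal R) (h : Module.Finite R ((R ⧸ 𝔞) →ₗ[R] A)) :
    ∀ p : Ideal R, IsAttachedPrime R A p → 𝔞 ≤ p → p = IsLocalRing.maximalIdeal R := by
  rintro p ⟨hp, N, hpN⟩ h𝔞p
  rw [annihilator_quotient] at hpN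
  by_contra hne
  obtain ⟨x, hxm, hxp⟩ :=
    SetLike.exists_of_lt ((IsLocalRing.le_maximalIdeal hp.ne_top).lt_of_ne hne)
  have htop : x ∉ (N.colon (⊤ : Submodule R A)).radical := by
    rwa [top_coe, ← hpN, hp.radical]
  obtain ⟨S, hS⟩ := exists_minimal_of_wellFoundedLT
    (fun S : Submodule R A => x ∉ (N.colon S).radical) ⟨⊤, htop⟩
  have := finite_torsionBySet_of_finite_hom (A := A) 𝔞
  have : IsNoetherian R (torsionBySet R A 𝔞) :=
    isNoetherian_of_isNoetherianRing_of_finite R _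
  have hSfg : S.FG := fg_of_le_radical_annihilator (IsNoetherian.noetherian 𝔞) fun y hy =>
    mem_radical_annihilator_of_minimal_notMem_radical_colon hS (hpN ▸ h𝔞p hy)
  have hSbot : S = ⊥ := eq_bot_of_eq_pointwise_smul_of_mem_jacobson_annihilator hSfg
    (pointwise_smul_eq_of_minimal_notMem_radical_colon hS).symm
    (IsLocalRing.maximalIdeal_le_jacobson _ hxm)
  exact hS.prop (by simp [hSbot, colon_singleton_zero, Ideal.radical_top])
end

section
/- Let (R,𝔪) be a Noetherian local ring, A an Artinian R-module, and x ∈ R an element such that every attached prime of A containing x equals 𝔪 (i.e., V(Rx) ∩ Att_R(A) ⊆ {𝔪}). Then the R-module A/xA has finite length. -/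
/-!
An Artinian module `M` is a finite irredundant sum of submodules `T` on each of which every
scalar acts surjectively or nilpotently. Dividing `M` by the other summands shows that
`√(ann T)` is an attached prime of `M`, so `√(ann M)` is the intersection of the attached primes.
For `M = A/xA` these are attached primes of `A` containing `x`, hence equal to `𝔪`; thus
`𝔪ⁿ M = 0` for some `n`, and an Artinian module killed by a power of a maximal ideal is
Noetherian (by induction on `n`, the case `n = 1` being a vector space over `R/𝔪`).
-/

open CategoryTheory

universe u

variable (R : Type u) [CommRing R]

section

variable {R}
variable {M N : Type*} [AddCommGroup M] [Module R M] [AddCommGroup N] [Module R N]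

theorem Ideal.le_annihilator_quotient_smul_top (I : Ideal R) :
    I ≤ Module.annihilator R (M ⧸ I • (⊤ : Submodule R M)) :=
  (Module.isTorsionBySet_iff_subset_annihilator R _).mp
    (Module.isTorsionBySet_quotient_ideal_smul M I)

theorem isNoetherian_of_isArtinian_of_le_annihilator (𝔪 : Ideal R) [𝔪.IsMaximal]
    [IsArtinian R M] (h : 𝔪 ≤ Module.annihilator R M) : IsNoetherian R M := by
  have hM : Module.IsTorsionBySet R M 𝔪 := (Module.isTorsionBySet_iff_subset_annihilator R M).mpr h
  let _ := Ideal.Quotient.field 𝔪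
  let _ := hM.module
  have : IsSemisimpleModule R M := hM.isSemisimpleModule_iff.mp inferInstance
  exact (IsSemisimpleModule.finite_tfae.out 2 1).mp ‹_›

theorem isNoetherian_of_isArtinian_of_pow_le_annihilator (𝔪 : Ideal R) [𝔪.IsMaximal] (n : ℕ)
    [IsArtinian R M] (h : 𝔪 ^ n ≤ Module.annihilator R M) : IsNoetherian R M := by
  induction n generalizing M with
  | zero =>
    rw [pow_zero, Ideal.one_eq_top, top_le_iff, Module.annihilator_eq_top_iff] at h
    infer_instance
  | succ n ih =>
    let S : Submodule R M := 𝔪 • ⊤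
    have hS : IsNoetherian R S := ih <| by
      rw [← Submodule.annihilator_top, Submodule.le_annihilator_iff] at h
      rwa [Submodule.le_annihilator_iff, ← Submodule.mul_smul, ← pow_succ]
    have hQ : IsNoetherian R (M ⧸ S) :=
      isNoetherian_of_isArtinian_of_le_annihilator 𝔪 𝔪.le_annihilator_quotient_smul_top
    exact (isNoetherian_iff_submodule_quotient S).mpr ⟨hS, hQ⟩

theorem Submodule.radical_annihilator_finset_sup {ι : Type*} (s : Finset ι)
    (T : ι → Submodule R M) :
    (s.sup T).annihilator.radical = s.inf fun i ↦ (T i).annihilator.radical := by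
  classical
  induction s using Finset.induction_on with
  | empty => simp [Submodule.annihilator_bot]
  | insert i s _ ih => rw [Finset.sup_insert, Finset.inf_insert, Submodule.annihilator_sup,
      Ideal.radical_inf, ih]

theorem smul_top_ne_top_of_le_radical_annihilator [Nontrivial M] {I : Ideal R} (hI : I.FG)
    (h : I ≤ (Module.annihilator R M).radical) : I • (⊤ : Submodule R M) ≠ ⊤ := by
  intro htop
  obtain ⟨n, hn⟩ := Ideal.exists_pow_le_of_le_radical_of_fg h hI
  have hpow : ∀ k : ℕ, I ^ k • (⊤ : Submodule R M) = ⊤ := fun k ↦ by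
    induction k with
    | zero => simp
    | succ k ih => rw [pow_succ', Submodule.mul_smul, ih, htop]
  have hbot : I ^ n • (⊤ : Submodule R M) = ⊥ := by
    rw [← Submodule.le_annihilator_iff, Submodule.annihilator_top]
    exact hn
  exact top_ne_bot ((hpow n).symm.trans hbot)

variable (R M) in
/-- Unlike the usual notion of a secondary module, the zero module is secondary here. -/
def IsSecondary : Prop :=
  ∀ a : R, Function.Surjective (a • · : M → M) ∨ a ∈ (Module.annihilator R M).radical

theorem surjective_pow_smul_of_surjective_smul {a : R}
    (ha : Function.Surjective (a • · : M → M)) (k : ℕ) :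
    Function.Surjective (a ^ k • · : M → M) := by
  rw [← smul_iterate]
  exact ha.iterate k

theorem not_surjective_smul_of_mem_radical_annihilator [Nontrivial M] {a : R}
    (ha : a ∈ (Module.annihilator R M).radical) : ¬ Function.Surjective (a • · : M → M) := by
  intro hsurj
  obtain ⟨k, hk⟩ := Ideal.mem_radical_iff.mp ha
  refine not_subsingleton M ⟨fun m m' ↦ ?_⟩
  obtain ⟨y, rfl⟩ := surjective_pow_smul_of_surjective_smul hsurj k m
  obtain ⟨y', rfl⟩ := surjective_pow_smul_of_surjective_smul hsurj k m'
  simp only [Module.mem_annihilator.mp hk]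

theorem LinearMap.surjective_smul_of_surjective {f : M →ₗ[R] N} (hf : Function.Surjective f)
    {a : R} (ha : Function.Surjective (a • · : M → M)) : Function.Surjective (a • · : N → N) := by
  intro n
  obtain ⟨m, rfl⟩ := hf n
  obtain ⟨m', rfl⟩ := ha m
  exact ⟨f m', (f.map_smul a m').symm⟩

namespace IsSecondary

theorem of_surjective (hM : IsSecondary R M) (f : M →ₗ[R] N) (hf : Function.Surjective f) :
    IsSecondary R N := fun a ↦
  (hM a).imp (LinearMap.surjective_smul_of_surjective hf)
    (Ideal.radical_mono (f.annihilator_le_of_surjective hf) ·)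

theorem radical_annihilator_eq_of_surjective [Nontrivial N] (hM : IsSecondary R M)
    (f : M →ₗ[R] N) (hf : Function.Surjective f) :
    (Module.annihilator R N).radical = (Module.annihilator R M).radical := by
  refine le_antisymm (fun a ha ↦ ?_) (Ideal.radical_mono (f.annihilator_le_of_surjective hf))
  exact (hM a).resolve_left fun hsurj ↦ not_surjective_smul_of_mem_radical_annihilator ha
    (LinearMap.surjective_smul_of_surjective hf hsurj)

theorem isPrime_radical_annihilator [Nontrivial M] (hM : IsSecondary R M) :
    (Module.annihilator R M).radical.IsPrime := by
  refine Ideal.isPrime_iff.mpr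
    ⟨fun htop ↦ ?_, fun {b c} hbc ↦ or_iff_not_imp_left.mpr fun hb ↦ ?_⟩
  · exact not_subsingleton M (Module.annihilator_eq_top_iff.mp (Ideal.radical_eq_top.mp htop))
  · obtain ⟨k, hk⟩ := Ideal.mem_radical_iff.mp hbc
    refine Ideal.mem_radical_iff.mpr ⟨k, Module.mem_annihilator.mpr fun m ↦ ?_⟩
    obtain ⟨m', rfl⟩ := surjective_pow_smul_of_surjective_smul ((hM b).resolve_right hb) k m
    rw [smul_smul, ← mul_pow, mul_comm, Module.mem_annihilator.mp hk]

end IsSecondary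

theorem exists_finset_isSecondary_sup_eq [IsArtinian R M] (N : Submodule R M) :
    ∃ s : Finset (Submodule R M), (∀ T ∈ s, IsSecondary R T) ∧ s.sup id = N := by
  classical
  induction N using WellFoundedLT.induction with
  | _ N ih =>
  by_cases hN : IsSecondary R N
  · exact ⟨{N}, by simpa using hN, by simp⟩
  obtain ⟨a, ha_surj, ha_rad⟩ : ∃ a : R, ¬ Function.Surjective (a • · : N → N) ∧
      a ∉ (Module.annihilator R N).radical := by
    simpa [IsSecondary, not_or] using hN
  -- Fitting: for large `n`, `N = ker aⁿ ⊔ aⁿ N`, and both pieces are proper.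
  let f : Module.End R N := algebraMap R _ a
  obtain ⟨n, hcod, hn⟩ := (f.eventually_codisjoint_ker_pow_range_pow.and
    (Filter.eventually_ge_atTop 1)).exists
  have hf : ∀ m : N, (f ^ n) m = a ^ n • m := fun m ↦ by
    rw [← map_pow, Module.algebraMap_end_apply]
  have hker : LinearMap.ker (f ^ n) < ⊤ := by
    refine lt_top_iff_ne_top.mpr fun h ↦ ha_rad (Ideal.mem_radical_iff.mpr ⟨n, ?_⟩)
    exact Module.mem_annihilator.mpr fun m ↦ by
      rw [← hf, LinearMap.ker_eq_top.mp h, LinearMap.zero_apply]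
  have hrange : LinearMap.range (f ^ n) < ⊤ := by
    refine lt_top_iff_ne_top.mpr fun h ↦ ha_surj fun m ↦ ?_
    obtain ⟨m', hm'⟩ := LinearMap.range_eq_top.mp h m
    refine ⟨a ^ (n - 1) • m', ?_⟩
    change a • a ^ (n - 1) • m' = m
    rw [← hm', hf, smul_smul, ← pow_succ', Nat.sub_add_cancel hn]
  have hmap {P : Submodule R N} (hP : P < ⊤) : P.map N.subtype < N :=
    (Submodule.map_strictMono_of_injective N.injective_subtype hP).trans_eq N.map_subtype_top
  obtain ⟨s₁, hs₁, hsup₁⟩ := ih _ (hmap hker)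
  obtain ⟨s₂, hs₂, hsup₂⟩ := ih _ (hmap hrange)
  refine ⟨s₁ ∪ s₂, fun T hT ↦ (Finset.mem_union.mp hT).elim (hs₁ T) (hs₂ T), ?_⟩
  rw [Finset.sup_union, hsup₁, hsup₂, ← Submodule.map_sup, codisjoint_iff.mp hcod,
    N.map_subtype_top]

theorem exists_finset_isSecondary_sup_eq_top_irredundant [IsArtinian R M] :
    ∃ s : Finset (Submodule R M), (∀ T ∈ s, IsSecondary R T) ∧ s.sup id = ⊤ ∧
      ∀ T ∈ s, (s.erase T).sup id ≠ ⊤ := by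
  classical
  obtain ⟨s, ⟨hs, hsup⟩, hmin⟩ := (measure Finset.card).wf.has_min
    {s : Finset (Submodule R M) | (∀ T ∈ s, IsSecondary R T) ∧ s.sup id = ⊤}
    (exists_finset_isSecondary_sup_eq ⊤)
  refine ⟨s, hs, hsup, fun T hT htop ↦ ?_⟩
  exact hmin (s.erase T) ⟨fun U hU ↦ hs U (Finset.mem_of_mem_erase hU), htop⟩
    (Finset.card_erase_lt_of_mem hT)

end

section

variable {R}
variable {M N : Type u} [AddCommGroup M] [Module R M] [AddCommGroup N] [Module R N]

theorem IsAttachedPrime.annihilator_le {p : Ideal R} (hp : IsAttachedPrime R M p) :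
    Module.annihilator R M ≤ p := by
  obtain ⟨-, N, rfl⟩ := hp
  exact N.mkQ.annihilator_le_of_surjective N.mkQ_surjective

theorem IsAttachedPrime.of_surjective {p : Ideal R} (hp : IsAttachedPrime R N p)
    (f : M →ₗ[R] N) (hf : Function.Surjective f) : IsAttachedPrime R M p := by
  obtain ⟨hprime, N', rfl⟩ := hp
  let g := N'.mkQ ∘ₗ f
  have hg : Function.Surjective g := N'.mkQ_surjective.comp hf
  exact ⟨hprime, LinearMap.ker g, (g.quotKerEquivOfSurjective hg).annihilator_eq.symm⟩

theorem IsSecondary.isAttachedPrime_radical_annihilator [IsNoetherianRing R] [Nontrivial M]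
    (hM : IsSecondary R M) : IsAttachedPrime R M (Module.annihilator R M).radical := by
  set p := (Module.annihilator R M).radical
  have : Nontrivial (M ⧸ p • (⊤ : Submodule R M)) := Submodule.Quotient.nontrivial_iff.mpr
    (smul_top_ne_top_of_le_radical_annihilator (IsNoetherian.noetherian p) le_rfl)
  refine ⟨hM.isPrime_radical_annihilator, p • ⊤, le_antisymm p.le_annihilator_quotient_smul_top ?_⟩
  exact Ideal.le_radical.trans_eq
    (hM.radical_annihilator_eq_of_surjective _ (Submodule.mkQ_surjective _))

theorem radical_annihilator_eq_sInf_isAttachedPrime [IsNoetherianRing R] [IsArtinian R M] :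
    (Module.annihilator R M).radical = sInf {p | IsAttachedPrime R M p} := by
  refine le_antisymm (le_sInf fun p hp ↦ (hp.1.radical_le_iff).mpr hp.annihilator_le) ?_
  obtain ⟨s, hs, hsup, hirred⟩ :=
    exists_finset_isSecondary_sup_eq_top_irredundant (R := R) (M := M)
  rw [← Submodule.annihilator_top, ← hsup, Submodule.radical_annihilator_finset_sup]
  refine Finset.le_inf fun T hT ↦ ?_
  set L := (s.erase T).sup id
  have : Nontrivial (M ⧸ L) := Submodule.Quotient.nontrivial_iff.mpr (hirred T hT)
  have hLT : L ⊔ T = ⊤ := by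
    rw [sup_comm, ← hsup, ← Finset.insert_erase hT, Finset.sup_insert]
    rfl
  have hsurj : Function.Surjective (L.mkQ ∘ₗ T.subtype) := by
    rw [← LinearMap.range_eq_top, LinearMap.range_comp, Submodule.range_subtype,
      Submodule.map_mkQ_eq_top, hLT]
  rw [Function.id_def, ← (hs T hT).radical_annihilator_eq_of_surjective _ hsurj]
  exact sInf_le (((hs T hT).of_surjective _ hsurj).isAttachedPrime_radical_annihilator.of_surjective
    L.mkQ L.mkQ_surjective)

end

theorem stmt2 [IsNoetherianRing R] [IsLocalRing R] (A : Type u) [AddCommGroup A] [Module R A]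
    [IsArtinian R A] (x : R)
    (h : ∀ p : Ideal R, IsAttachedPrime R A p → x ∈ p → p = IsLocalRing.maximalIdeal R) :
    IsFiniteLength R (A ⧸ (Ideal.span {x} • ⊤ : Submodule R A)) := by
  set K : Submodule R A := Ideal.span {x} • ⊤
  have hx : x ∈ Module.annihilator R (A ⧸ K) :=
    (Ideal.span {x}).le_annihilator_quotient_smul_top (Ideal.mem_span_singleton_self x)
  have hmax : IsLocalRing.maximalIdeal R ≤ (Module.annihilator R (A ⧸ K)).radical := by
    rw [radical_annihilator_eq_sInf_isAttachedPrime]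
    exact le_sInf fun p hp ↦
      (h p (hp.of_surjective K.mkQ K.mkQ_surjective) (hp.annihilator_le hx)).ge
  obtain ⟨n, hn⟩ := Ideal.exists_pow_le_of_le_radical_of_fg hmax (IsNoetherian.noetherian _)
  have := isNoetherian_of_isArtinian_of_pow_le_annihilator _ n hn
  exact isFiniteLength_iff_isNoetherian_isArtinian.mpr ⟨this, inferInstance⟩
end

section
/- Let R be a Noetherian ring, 𝔞 an ideal, and M an R-module with Supp(M) ⊆ V(𝔞) and dim Supp(M) = 0 such that Hom_R(R/𝔞, M) is weakly Laskerian. Then M is weakly Laskerian and hence 𝔞-weakly cofinite. -/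
open CategoryTheory

universe u

variable (R : Type u) [CommRing R]

/-!
A prime of `Supp M` is minimal in `Supp M` because `dim Supp M = 0`, hence associated to `M`;
since it contains `𝔞`, it is then also associated to `Hom(R/𝔞, M)`. So `Supp M` is finite, and
a module with finite support is weakly Laskerian. Computing `Ext^i(R/𝔞, M)` from a resolution of
`R/𝔞` by finite projective modules `Pᵢ` exhibits it as a subquotient of `Hom(Pᵢ, M)`, whose
support lies in `Supp M`; so the `Ext` modules have finite support as well.
-/

section AssociatedPrimes

variable {R} {M : Type*} [AddCommGroup M] [Module R M]

theorem IsAssociatedPrime.mem_support {I : Ideal R} (h : IsAssociatedPrime I M) :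
    (⟨I, h.isPrime⟩ : PrimeSpectrum R) ∈ Module.support R M := by
  obtain ⟨-, x, hx⟩ := h
  rw [Submodule.bot_colon'] at hx
  exact Module.mem_support_iff_exists_annihilator.mpr ⟨x, hx ▸ Ideal.le_radical⟩

theorem IsAssociatedPrime.of_minimal_support [IsNoetherianRing R] {p : PrimeSpectrum R}
    (hp : Minimal (· ∈ Module.support R M) p) : IsAssociatedPrime p.asIdeal M := by
  obtain ⟨x, hx⟩ := Module.mem_support_iff_exists_annihilator.mp hp.prop
  obtain ⟨q, hq, hqp⟩ := Ideal.exists_minimalPrimes_le hx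
  have hqx : q ∈ associatedPrimes R (R ∙ x) :=
    Module.associatedPrimes.minimalPrimes_annihilator_subset_associatedPrimes R (R ∙ x) hq
  have hqM : IsAssociatedPrime q M := hqx.map_of_injective _ (R ∙ x).subtype_injective
  exact hp.eq_of_le hqM.mem_support hqp ▸ hqM

theorem IsAssociatedPrime.linearMap_quotient [IsNoetherianRing R] {I 𝔞 : Ideal R}
    (h : IsAssociatedPrime I M) (h𝔞 : 𝔞 ≤ I) : IsAssociatedPrime I (R ⧸ 𝔞 →ₗ[R] M) := by
  obtain ⟨hI, x, rfl⟩ := isAssociatedPrime_iff.mp h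
  have h𝔞x : 𝔞 ≤ LinearMap.ker (LinearMap.toSpanSingleton R M x) := by
    rwa [Submodule.bot_colon', Submodule.annihilator_span_singleton] at h𝔞
  set φ := 𝔞.liftQ _ h𝔞x
  have hφ : φ (Submodule.Quotient.mk 1) = x := by
    rw [Submodule.liftQ_apply, LinearMap.toSpanSingleton_apply, one_smul]
  refine isAssociatedPrime_iff.mpr ⟨hI, φ, ?_⟩
  ext r
  simp only [Submodule.mem_colon_singleton, Submodule.mem_bot]
  constructor
  · intro hr
    refine Submodule.linearMap_qext _ (LinearMap.ext_ring ?_)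
    rwa [LinearMap.comp_apply, Submodule.mkQ_apply, LinearMap.smul_apply, hφ]
  · intro hr
    rw [← hφ, ← LinearMap.smul_apply, hr, LinearMap.zero_apply]

theorem minimal_mem_support_of_krullDim_nonpos (h : Order.krullDim (Module.support R M) ≤ 0)
    {p : PrimeSpectrum R} (hp : p ∈ Module.support R M) :
    Minimal (· ∈ Module.support R M) p :=
  ⟨hp, fun q hq hqp => Order.krullDim_nonpos_iff_forall_isMin.mp h ⟨p, hp⟩
    (show (⟨q, hq⟩ : Module.support R M) ≤ ⟨p, hp⟩ from hqp)⟩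

/-- Every prime of `Supp M ∩ V(𝔞)` that is minimal in `Supp M` is associated to
`Hom(R/𝔞, M)`. -/
theorem finite_support_of_finite_associatedPrimes_linearMap_quotient [IsNoetherianRing R]
    {𝔞 : Ideal R} (hV : Module.support R M ⊆ PrimeSpectrum.zeroLocus 𝔞)
    (hmin : ∀ p ∈ Module.support R M, Minimal (· ∈ Module.support R M) p)
    (hfin : (associatedPrimes R (R ⧸ 𝔞 →ₗ[R] M)).Finite) :
    (Module.support R M).Finite :=
  (hfin.preimage (Function.Injective.injOn fun _ _ => PrimeSpectrum.ext)).subset fun p hp =>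
    (IsAssociatedPrime.of_minimal_support (hmin p hp)).linearMap_quotient (hV hp)

end AssociatedPrimes

section WeaklyLaskerian

variable {R} {M : Type u} [AddCommGroup M] [Module R M]

theorem IsWeaklyLaskerian.finite_associatedPrimes (h : IsWeaklyLaskerian R M) :
    (associatedPrimes R M).Finite := by
  rw [← LinearEquiv.AssociatedPrimes.eq (Submodule.quotEquivOfEqBot (⊥ : Submodule R M) rfl)]
  exact h ⊥

theorem isWeaklyLaskerian_of_finite_support (h : (Module.support R M).Finite) :
    IsWeaklyLaskerian R M := fun N =>
  (h.image PrimeSpectrum.asIdeal).subset fun _ hI =>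
    ⟨_, Module.support_subset_of_surjective N.mkQ N.mkQ_surjective hI.mem_support, rfl⟩

end WeaklyLaskerian

section Ext

variable {R}

theorem Module.support_linearMap_subset (X : Type*) [AddCommGroup X] [Module R X]
    [Module.Finite R X] (M : Type*) [AddCommGroup M] [Module R M] :
    Module.support R (X →ₗ[R] M) ⊆ Module.support R M := by
  intro p hp
  obtain ⟨φ, hφ⟩ := Module.mem_support_iff_exists_annihilator.mp hp
  obtain ⟨n, g, hg⟩ := Module.Finite.exists_fin (R := R) (M := X)
  have hinf : (Finset.univ.inf fun i => (R ∙ φ (g i)).annihilator) ≤ p.asIdeal := by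
    refine le_trans (fun r hr => ?_) hφ
    simp only [Finset.inf_eq_iInf, Finset.mem_univ, iInf_true, Submodule.mem_iInf,
      Submodule.mem_annihilator_span_singleton] at hr
    rw [Submodule.mem_annihilator_span_singleton]
    exact LinearMap.ext_on_range hg fun i => hr i
  obtain ⟨i, -, hi⟩ := (p.isPrime.inf_le').mp hinf
  exact Module.mem_support_iff_exists_annihilator.mpr ⟨φ (g i), hi⟩

theorem ModuleCat.support_homology_subset {ι : Type*} {c : ComplexShape ι}
    (K : HomologicalComplex (ModuleCat.{u} R) c) (i : ι) :
    Module.support R (K.homology i) ⊆ Module.support R (K.X i) :=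
  (Module.support_subset_of_surjective _
    ((ModuleCat.epi_iff_surjective (K.homologyπ i)).mp inferInstance)).trans
    (Module.support_subset_of_injective _
      ((ModuleCat.mono_iff_injective (K.iCycles i)).mp inferInstance))

theorem CategoryTheory.ProjectiveResolution.support_extModule_subset {Z : ModuleCat.{u} R}
    (P : ProjectiveResolution Z) [∀ n, Module.Finite R (P.complex.X n)] (M : ModuleCat.{u} R)
    (i : ℕ) : Module.support R (extModule R i Z M) ⊆ Module.support R M :=
  calc Module.support R (extModule R i Z M)
      = Module.support R ((P.complex.linearYonedaObj R M).homology i) :=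
        (P.isoExt i M).toLinearEquiv.support_eq
    _ ⊆ Module.support R ((P.complex.linearYonedaObj R M).X i) :=
        ModuleCat.support_homology_subset _ i
    _ = Module.support R (P.complex.X i →ₗ[R] M) := ModuleCat.homLinearEquiv.support_eq
    _ ⊆ Module.support R M := Module.support_linearMap_subset _ M

namespace FGModuleCat

theorem projective_of_free (n : ℕ) : Projective (FGModuleCat.of R (Fin n → R)) :=
  (forget₂ (FGModuleCat R) (ModuleCat R)).projective_of_map_projective
    (ModuleCat.projective_of_free (Pi.basisFun R (Fin n)))

theorem epi_ofHom_of_surjective {X Y : Type u} [AddCommGroup X] [Module R X] [Module.Finite R X]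
    [AddCommGroup Y] [Module R Y] [Module.Finite R Y] {f : X →ₗ[R] Y}
    (hf : Function.Surjective f) : Epi (FGModuleCat.ofHom f) :=
  (forget₂ (FGModuleCat R) (ModuleCat R)).epi_of_epi_map ((ModuleCat.epi_iff_surjective _).mpr hf)

instance : EnoughProjectives (FGModuleCat.{u} R) where
  presentation X := by
    obtain ⟨n, f, hf⟩ := Module.Finite.exists_fin' R X
    exact ⟨{ p := FGModuleCat.of R (Fin n → R)
             projective := projective_of_free n
             f := FGModuleCat.ofHom f
             epi := epi_ofHom_of_surjective hf }⟩

/-- A projective object of `FGModuleCat R` is a retract of some `R^n`. -/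
instance : (forget₂ (FGModuleCat.{u} R) (ModuleCat.{u} R)).PreservesProjectiveObjects where
  projective_obj {P} hP := by
    obtain ⟨n, f, hf⟩ := Module.Finite.exists_fin' R P
    have := epi_ofHom_of_surjective hf
    have := ModuleCat.projective_of_free (M := ModuleCat.of R (Fin n → R)) (Pi.basisFun R (Fin n))
    let r : Retract P.obj (ModuleCat.of R (Fin n → R)) :=
      { i := (forget₂ _ _).map (Projective.factorThru (𝟙 P) (FGModuleCat.ofHom f))
        r := ModuleCat.ofHom f
        retract := congrArg (forget₂ (FGModuleCat R) (ModuleCat R)).map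
          (Projective.factorThru_comp (𝟙 P) (FGModuleCat.ofHom f)) }
    exact r.projective

end FGModuleCat

/-- Over a Noetherian ring, `FGModuleCat R` is abelian with enough projectives, so its projective
resolutions are projective resolutions in `ModuleCat R` by finite modules. -/
noncomputable def finiteProjectiveResolution [IsNoetherianRing R] (Z : ModuleCat.{u} R)
    [Module.Finite R Z] : ProjectiveResolution Z :=
  (forget₂ (FGModuleCat R) (ModuleCat R)).mapProjectiveResolution
    (ProjectiveResolution.of (FGModuleCat.of R Z))

instance [IsNoetherianRing R] (Z : ModuleCat.{u} R) [Module.Finite R Z] (n : ℕ) :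
    Module.Finite R ((finiteProjectiveResolution Z).complex.X n) :=
  inferInstanceAs (Module.Finite R ((ProjectiveResolution.of (FGModuleCat.of R Z)).complex.X n))

theorem support_extModule_subset [IsNoetherianRing R] (Z M : ModuleCat.{u} R) [Module.Finite R Z]
    (i : ℕ) : Module.support R (extModule R i Z M) ⊆ Module.support R M :=
  (finiteProjectiveResolution Z).support_extModule_subset M i

end Ext

theorem stmt19 [IsNoetherianRing R] (𝔞 : Ideal R) (M : ModuleCat.{u} R)
    (h1 : Module.support R M ⊆ PrimeSpectrum.zeroLocus (𝔞 : Set R))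
    (h2 : suppDim R M = 0)
    (h3 : IsWeaklyLaskerian R ((R ⧸ 𝔞) →ₗ[R] M)) :
    IsWeaklyLaskerian R M ∧ IsWeaklyCofinite R 𝔞 M := by
  have hfin : (Module.support R M).Finite :=
    finite_support_of_finite_associatedPrimes_linearMap_quotient h1
      (fun _ => minimal_mem_support_of_krullDim_nonpos h2.le) h3.finite_associatedPrimes
  exact ⟨isWeaklyLaskerian_of_finite_support hfin, h1, fun i =>
    isWeaklyLaskerian_of_finite_support (hfin.subset (support_extModule_subset _ M i))⟩
end
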